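/- Let H be an n-dimensional mixed dihedral group relative to X and Y, and Γ = Cay(H, (X ∪ Y) \ {1}). Then each right coset Xg is a maximal clique of Γ, each right coset Yg is a maximal clique of Γ, and every X-edge {g, xg} (x ∈ X \ {1}) lies in the unique maximal clique Xg, while every Y-edge {g, yg} lies in the unique maximal clique Yg. -/

import Mathlib

/-- The Cayley graph `Cay(H, S)`: vertex set `H`, edges `{g, sg}` for `s ∈ S`. -/
def cayleyGraph {H : Type*} [Group H] (S : Set H) : SimpleGraph H :=
  SimpleGraph.fromRel (fun a b => b * a⁻¹ ∈ S)

/-- The right coset `Xg` of a subgroup `X`, as a set. -/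
def rcoset {H : Type*} [Group H] (X : Subgroup H) (g : H) : Set H :=
  {p | p * g⁻¹ ∈ X}

/-!
The map `X × Y → H/H'`, `(x, y) ↦ [x][y]` is surjective because `X ∪ Y` generates `H`, hence
bijective by counting, so `X ∩ Y = 1`. Every edge of `Γ` joins two vertices of a common `X`- or
`Y`-coset. If a clique contains an `X`-edge `{g, xg}` and a vertex `c ∉ Xg`, then `cg⁻¹ ∈ Y`, and
`c(xg)⁻¹ ∈ X` would put `cg⁻¹` in `X`, while `c(xg)⁻¹ ∈ Y` would put `x` in `Y`. So such a clique
lies in `Xg`; as `X ≠ 1`, every coset `Xg` contains an `X`-edge, which gives maximality.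
-/

namespace Subgroup

theorem disjoint_of_card_mul_card_le_card_abelianization {G : Type*} [Group G] [Finite G]
    {X Y : Subgroup G}
    (hXY : X ⊔ Y = ⊤) (hcard : Nat.card X * Nat.card Y ≤ Nat.card (Abelianization G)) :
    Disjoint X Y := by
  let φ : X × Y →* Abelianization G :=
    (Abelianization.of.comp X.subtype).coprod (Abelianization.of.comp Y.subtype)
  have hsurj : Function.Surjective φ := by
    rintro ⟨h⟩
    have hmem : Abelianization.of h ∈ X.map Abelianization.of ⊔ Y.map Abelianization.of := by
      rw [← map_sup, hXY]
      exact ⟨h, mem_top h, rfl⟩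
    obtain ⟨_, ⟨x, hx, rfl⟩, _, ⟨y, hy, rfl⟩, hxy⟩ := mem_sup.mp hmem
    exact ⟨(⟨x, hx⟩, ⟨y, hy⟩), hxy⟩
  have hinj : Function.Injective φ :=
    (hsurj.bijective_of_nat_card_le (by rwa [Nat.card_prod])).injective
  rw [disjoint_def]
  intro h hX hY
  have hpair : ((⟨h, hX⟩, 1) : X × Y) = (1, ⟨h, hY⟩) := hinj (by simp [φ])
  simpa using congrArg (fun p : X × Y => (p.1 : G)) hpair

end Subgroup

theorem card_eq_two_pow_of_mulEquiv {G : Type*} [Group G] {n : ℕ}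
    (e : G ≃* (Fin n → Multiplicative (ZMod 2))) : Nat.card G = 2 ^ n := by
  rw [Nat.card_congr e.toEquiv, Nat.card_fun]
  simp

section CayleyGraph

variable {H : Type*} [Group H] {S : Set H} {X Y : Subgroup H} {C : Set H} {g x : H}

theorem mem_rcoset {p : H} : p ∈ rcoset X g ↔ p * g⁻¹ ∈ X :=
  Iff.rfl

theorem mem_rcoset_self (g : H) : g ∈ rcoset X g := by
  simp [rcoset, X.one_mem]

theorem mul_mem_rcoset (hx : x ∈ X) (g : H) : x * g ∈ rcoset X g := by
  simpa [rcoset, mul_assoc] using hx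

theorem cayleyGraph_adj_iff {a b : H} :
    (cayleyGraph S).Adj a b ↔ a ≠ b ∧ (b * a⁻¹ ∈ S ∨ a * b⁻¹ ∈ S) :=
  SimpleGraph.fromRel_adj _ _ _

theorem mul_inv_mem_or_of_adj (hS : S ⊆ X ∪ Y) {a b : H} (h : (cayleyGraph S).Adj a b) :
    b * a⁻¹ ∈ X ∨ b * a⁻¹ ∈ Y := by
  obtain ⟨-, hba | hab⟩ := cayleyGraph_adj_iff.mp h
  · exact hS hba
  · rw [← inv_inv (b * a⁻¹), mul_inv_rev, inv_inv]
    exact (hS hab).imp X.inv_mem Y.inv_mem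

theorem isClique_rcoset (hS : (X : Set H) \ {1} ⊆ S) (g : H) :
    (cayleyGraph S).IsClique (rcoset X g) := by
  intro p hp q hq hpq
  refine cayleyGraph_adj_iff.mpr ⟨hpq, Or.inl (hS ⟨?_, ?_⟩)⟩
  · simpa [mul_assoc] using X.mul_mem hq (X.inv_mem hp)
  · simpa [mul_inv_eq_one] using hpq.symm

theorem subset_rcoset_of_isClique (hXY : Disjoint X Y) (hS : S ⊆ X ∪ Y)
    (hC : (cayleyGraph S).IsClique C) (hx : x ∈ X) (hx1 : x ≠ 1)
    (hgC : ({g, x * g} : Set H) ⊆ C) :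
    C ⊆ rcoset X g := by
  obtain ⟨hg, hxg⟩ := Set.pair_subset_iff.mp hgC
  intro c hc
  rw [mem_rcoset]
  by_contra hcX
  have hcY : c * g⁻¹ ∈ Y :=
    (mul_inv_mem_or_of_adj hS (hC hg hc (by rintro rfl; simp at hcX))).resolve_left hcX
  rcases mul_inv_mem_or_of_adj hS
      (hC hxg hc (by rintro rfl; simp [hx] at hcX)) with hcx | hcy
  · exact hcX (by simpa [mul_assoc] using X.mul_mem hcx hx)
  · refine hx1 (Subgroup.disjoint_def.mp hXY hx ?_)
    simpa [mul_assoc] using Y.mul_mem (Y.inv_mem hcy) hcY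

theorem eq_rcoset_of_isClique (hXY : Disjoint X Y) (hS : S ⊆ X ∪ Y) (hX : X ≠ ⊥)
    (hC : (cayleyGraph S).IsClique C) (h : rcoset X g ⊆ C) : C = rcoset X g := by
  obtain ⟨x, hx, hx1⟩ := X.bot_or_exists_ne_one.resolve_left hX
  exact (subset_rcoset_of_isClique hXY hS hC hx hx1
    (Set.pair_subset (h (mem_rcoset_self g)) (h (mul_mem_rcoset hx g)))).antisymm h

end CayleyGraph

/-- Let `H` be an `n`-dimensional mixed dihedral group relative to `X` and
`Y`, and `Γ = Cay(H, (X ∪ Y) \ {1})`. Then each right coset `Xg` is a maximal clique of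
`Γ`, each right coset `Yg` is a maximal clique of `Γ`, and every `X`-edge `{g, xg}` lies
in the unique maximal clique `Xg` (every clique containing `{g, xg}` is contained in
`Xg`), while every `Y`-edge `{g, yg}` lies in the unique maximal clique `Yg`. -/
theorem statement14 {H : Type*} [Group H] [Finite H] (n : ℕ) (hn : 2 ≤ n)
    (X Y : Subgroup H)
    (hX : Nonempty (X ≃* (Fin n → Multiplicative (ZMod 2))))
    (hY : Nonempty (Y ≃* (Fin n → Multiplicative (ZMod 2))))
    (hgen : Subgroup.closure ((X : Set H) ∪ (Y : Set H)) = ⊤)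
    (hab : Nonempty ((H ⧸ commutator H) ≃* (Fin (2 * n) → Multiplicative (ZMod 2)))) :
    (∀ g : H,
      (cayleyGraph (((X : Set H) ∪ (Y : Set H)) \ {1})).IsClique (rcoset X g) ∧
      (∀ C : Set H, (cayleyGraph (((X : Set H) ∪ (Y : Set H)) \ {1})).IsClique C →
        rcoset X g ⊆ C → C = rcoset X g)) ∧
    (∀ g : H,
      (cayleyGraph (((X : Set H) ∪ (Y : Set H)) \ {1})).IsClique (rcoset Y g) ∧
      (∀ C : Set H, (cayleyGraph (((X : Set H) ∪ (Y : Set H)) \ {1})).IsClique C →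
        rcoset Y g ⊆ C → C = rcoset Y g)) ∧
    (∀ g : H, ∀ x ∈ X, x ≠ 1 →
      ∀ C : Set H, (cayleyGraph (((X : Set H) ∪ (Y : Set H)) \ {1})).IsClique C →
        ({g, x * g} : Set H) ⊆ C → C ⊆ rcoset X g) ∧
    (∀ g : H, ∀ y ∈ Y, y ≠ 1 →
      ∀ C : Set H, (cayleyGraph (((X : Set H) ∪ (Y : Set H)) \ {1})).IsClique C →
        ({g, y * g} : Set H) ⊆ C → C ⊆ rcoset Y g) := by
  obtain ⟨eX⟩ := hX
  obtain ⟨eY⟩ := hY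
  obtain ⟨eab⟩ := hab
  have hXY : Disjoint X Y := by
    refine Subgroup.disjoint_of_card_mul_card_le_card_abelianization
      (by rw [Subgroup.sup_eq_closure, hgen]) ?_
    rw [card_eq_two_pow_of_mulEquiv eX, card_eq_two_pow_of_mulEquiv eY,
      card_eq_two_pow_of_mulEquiv (G := Abelianization H) eab, two_mul, pow_add]
  have hne_bot {Z : Subgroup H} (eZ : Z ≃* (Fin n → Multiplicative (ZMod 2))) : Z ≠ ⊥ := by
    rw [Ne, Subgroup.eq_bot_iff_card, card_eq_two_pow_of_mulEquiv eZ]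
    exact (Nat.one_lt_two_pow (by omega)).ne'
  have hSX : ((X : Set H) ∪ Y) \ {1} ⊆ X ∪ Y := Set.sdiff_subset
  have hSY : ((X : Set H) ∪ Y) \ {1} ⊆ Y ∪ X := Set.union_comm (X : Set H) Y ▸ hSX
  exact ⟨fun g ↦ ⟨isClique_rcoset (Set.sdiff_subset_sdiff_left Set.subset_union_left) g,
      fun _ hC ↦ eq_rcoset_of_isClique hXY hSX (hne_bot eX) hC⟩,
    fun g ↦ ⟨isClique_rcoset (Set.sdiff_subset_sdiff_left Set.subset_union_right) g,
      fun _ hC ↦ eq_rcoset_of_isClique hXY.symm hSY (hne_bot eY) hC⟩,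
    fun _ _ hx hx1 _ hC ↦ subset_rcoset_of_isClique hXY hSX hC hx hx1,
    fun _ _ hy hy1 _ hC ↦ subset_rcoset_of_isClique hXY.symm hSY hC hy hy1⟩
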